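/- Let N ≥ 2 be an integer and 0<s<1 with N>2s. Then the function σ ↦ K(σ) log(σ) (σ^{N−1} − σ^{2s−1}) is integrable on (1,∞) and its integral is strictly positive: 0 < ∫_1^∞ K(σ) log(σ) (σ^{N−1} − σ^{2s−1}) dσ < ∞. -/
import Mathlib


open MeasureTheory Real Filter

noncomputable section

/-- The spherical kernel
`K(σ) = (2 π^{(N-1)/2} / Γ((N-1)/2)) ∫_0^π sin^{N-2}(η) (1 − 2σ cos η + σ²)^{-(N+2s)/2} dη`. -/
def sphericalKernel (N : ℕ) (s σ : ℝ) : ℝ :=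
  2 * Real.pi ^ (((N : ℝ) - 1) / 2) / Real.Gamma (((N : ℝ) - 1) / 2) *
    ∫ η in (0 : ℝ)..Real.pi,
      Real.sin η ^ (N - 2) * (1 - 2 * σ * Real.cos η + σ ^ 2) ^ (-(((N : ℝ) + 2 * s) / 2))

namespace SK

lemma D_lb_sq (σ η : ℝ) (hσ : 1 ≤ σ) : (σ - 1) ^ 2 ≤ 1 - 2 * σ * Real.cos η + σ ^ 2 := by
  nlinarith [Real.cos_le_one η]

lemma D_pos (σ η : ℝ) (hσ : 1 < σ) : 0 < 1 - 2 * σ * Real.cos η + σ ^ 2 :=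
  lt_of_lt_of_le (pow_pos (by linarith) 2) (D_lb_sq σ η hσ.le)

lemma D_lb_eta (σ η : ℝ) (hσ : 1 ≤ σ) (h0 : 0 ≤ η) (hπ : η ≤ π) :
    (2 * η / π) ^ 2 ≤ 1 - 2 * σ * Real.cos η + σ ^ 2 := by
  have hπ0 := Real.pi_pos
  have h1 : 2 / π * (η / 2) ≤ Real.sin (η / 2) :=
    Real.mul_le_sin (by linarith) (by linarith)
  have hsq : (2 / π * (η / 2)) ^ 2 ≤ Real.sin (η / 2) ^ 2 := by
    have : 0 ≤ 2 / π * (η / 2) := by positivity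
    nlinarith
  have hcos : Real.cos η = 1 - 2 * Real.sin (η / 2) ^ 2 := by
    have h := Real.cos_two_mul (η / 2)
    have h2 : 2 * (η / 2) = η := by ring
    have hpy := Real.sin_sq_add_cos_sq (η / 2)
    rw [h2] at h; linarith
  have key : 4 * Real.sin (η / 2) ^ 2 ≤ 1 - 2 * σ * Real.cos η + σ ^ 2 := by
    nlinarith [sq_nonneg (σ - 1), sq_nonneg (Real.sin (η / 2))]
  have heq : (2 * η / π) ^ 2 = 4 * (2 / π * (η / 2)) ^ 2 := by
    field_simp; ring
  linarith [heq ▸ (by nlinarith : 4 * (2 / π * (η/2)) ^ 2 ≤ 4 * Real.sin (η/2) ^ 2)]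

lemma F_le_near (N : ℕ) (s σ η : ℝ) (hN2 : 2 ≤ N) (hs0 : 0 < s) (hσ : 1 < σ)
    (hη : η ∈ Set.Ioc (0:ℝ) π) :
    Real.sin η ^ (N - 2) * (1 - 2 * σ * Real.cos η + σ ^ 2) ^ (-(((N : ℝ) + 2 * s) / 2)) ≤
      (2 / π) ^ (-((N : ℝ) - 2 + s)) * (σ - 1) ^ (-(s + 2)) * η ^ (-s) := by
  obtain ⟨hη0, hηπ⟩ := hη
  have hπ0 := Real.pi_pos
  have ht : (0:ℝ) < σ - 1 := by linarith
  have hN2' : (2:ℝ) ≤ (N:ℝ) := by exact_mod_cast hN2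
  have hD1 := D_lb_sq σ η hσ.le
  have hD2 := D_lb_eta σ η hσ.le hη0.le hηπ
  have hD := D_pos σ η hσ
  set D := 1 - 2 * σ * Real.cos η + σ ^ 2 with hDdef
  have e1 : (σ - 1) ^ (s + 2) = ((σ - 1) ^ 2) ^ ((s + 2) / 2) := by
    rw [← Real.rpow_natCast (σ - 1) 2, ← Real.rpow_mul ht.le]; congr 1; ring
  have e2 : (2 * η / π) ^ ((N:ℝ) - 2 + s) = ((2 * η / π) ^ 2) ^ (((N:ℝ) - 2 + s) / 2) := by
    rw [← Real.rpow_natCast (2 * η / π) 2, ← Real.rpow_mul (by positivity)]; congr 1; ring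
  have h1 : (σ - 1) ^ (s + 2) ≤ D ^ ((s + 2) / 2) := by
    rw [e1]; exact Real.rpow_le_rpow (sq_nonneg _) hD1 (by linarith)
  have h2 : (2 * η / π) ^ ((N:ℝ) - 2 + s) ≤ D ^ (((N:ℝ) - 2 + s) / 2) := by
    rw [e2]; exact Real.rpow_le_rpow (sq_nonneg _) hD2 (by linarith)
  have hstep : (σ - 1) ^ (s + 2) * (2 * η / π) ^ ((N:ℝ) - 2 + s) ≤ D ^ (((N:ℝ) + 2 * s) / 2) := by
    calc (σ - 1) ^ (s + 2) * (2 * η / π) ^ ((N:ℝ) - 2 + s)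
        ≤ D ^ ((s + 2) / 2) * D ^ (((N:ℝ) - 2 + s) / 2) :=
          mul_le_mul h1 h2 (Real.rpow_nonneg (by positivity) _) (Real.rpow_nonneg hD.le _)
      _ = D ^ (((N:ℝ) + 2 * s) / 2) := by rw [← Real.rpow_add hD]; ring_nf
  have hABpos : 0 < (σ - 1) ^ (s + 2) * (2 * η / π) ^ ((N:ℝ) - 2 + s) := by
    have h2η : (0:ℝ) < 2 * η / π := by positivity
    exact mul_pos (Real.rpow_pos_of_pos ht _) (Real.rpow_pos_of_pos h2η _)
  have h4 : D ^ (-(((N:ℝ) + 2 * s) / 2)) ≤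
      ((σ - 1) ^ (s + 2) * (2 * η / π) ^ ((N:ℝ) - 2 + s))⁻¹ := by
    rw [Real.rpow_neg hD.le]
    gcongr
  have hsin : Real.sin η ^ (N - 2) ≤ η ^ (N - 2) :=
    pow_le_pow_left₀ (Real.sin_nonneg_of_nonneg_of_le_pi hη0.le hηπ) (Real.sin_le hη0.le) _
  have hmain : Real.sin η ^ (N - 2) * D ^ (-(((N : ℝ) + 2 * s) / 2)) ≤
      η ^ (N - 2) * ((σ - 1) ^ (s + 2) * (2 * η / π) ^ ((N:ℝ) - 2 + s))⁻¹ :=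
    mul_le_mul hsin h4 (Real.rpow_nonneg hD.le _) (pow_nonneg hη0.le _)
  refine hmain.trans (le_of_eq ?_)
  have hηpow : η ^ (N - 2) = η ^ ((N:ℝ) - 2) := by
    rw [← Real.rpow_natCast η (N - 2)]
    congr 1
    push_cast [Nat.cast_sub hN2]
    ring
  rw [hηpow, mul_inv, ← Real.rpow_neg ht.le, ← Real.rpow_neg (by positivity),
    show (2 * η / π) = (2 / π) * η by ring,
    Real.mul_rpow (by positivity) hη0.le]
  rw [show ((2:ℝ)/π) ^ (-((N:ℝ) - 2 + s)) * η ^ (-((N:ℝ) - 2 + s)) =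
      (2/π) ^ (-((N:ℝ) - 2 + s)) * η ^ (-((N:ℝ) - 2 + s)) from rfl]
  have : η ^ ((N:ℝ) - 2) * η ^ (-((N:ℝ) - 2 + s)) = η ^ (-s) := by
    rw [← Real.rpow_add hη0]; ring_nf
  calc η ^ ((N:ℝ) - 2) * ((σ - 1) ^ (-(s + 2)) *
        ((2/π) ^ (-((N:ℝ) - 2 + s)) * η ^ (-((N:ℝ) - 2 + s))))
      = (2/π) ^ (-((N:ℝ) - 2 + s)) * (σ - 1) ^ (-(s + 2)) *
        (η ^ ((N:ℝ) - 2) * η ^ (-((N:ℝ) - 2 + s))) := by ring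
    _ = (2/π) ^ (-((N:ℝ) - 2 + s)) * (σ - 1) ^ (-(s + 2)) * η ^ (-s) := by rw [this]

lemma F_cont (N : ℕ) (s σ : ℝ) (hσ : 1 < σ) :
    Continuous (fun η : ℝ => Real.sin η ^ (N - 2) *
      (1 - 2 * σ * Real.cos η + σ ^ 2) ^ (-(((N : ℝ) + 2 * s) / 2))) := by
  apply Continuous.mul (Real.continuous_sin.pow _)
  rw [continuous_iff_continuousAt]
  intro η
  have hD := D_pos σ η hσ
  exact ContinuousAt.rpow_const
    ((by fun_prop : Continuous fun η : ℝ => 1 - 2 * σ * Real.cos η + σ ^ 2).continuousAt)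
    (Or.inl hD.ne')

lemma F_intInt (N : ℕ) (s σ : ℝ) (hσ : 1 < σ) :
    IntervalIntegrable (fun η : ℝ => Real.sin η ^ (N - 2) *
      (1 - 2 * σ * Real.cos η + σ ^ 2) ^ (-(((N : ℝ) + 2 * s) / 2))) volume 0 π :=
  (F_cont N s σ hσ).intervalIntegrable 0 π

lemma I_pos (N : ℕ) (s σ : ℝ) (hσ : 1 < σ) :
    0 < ∫ η in (0:ℝ)..π, Real.sin η ^ (N - 2) *
      (1 - 2 * σ * Real.cos η + σ ^ 2) ^ (-(((N : ℝ) + 2 * s) / 2)) := by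
  apply intervalIntegral.intervalIntegral_pos_of_pos_on (F_intInt N s σ hσ) _ Real.pi_pos
  intro η hη
  have h1 : 0 < Real.sin η := Real.sin_pos_of_pos_of_lt_pi hη.1 hη.2
  have h2 := D_pos σ η hσ
  positivity

lemma I_meas (N : ℕ) (s : ℝ) :
    Measurable (fun σ : ℝ => ∫ η in (0:ℝ)..π, Real.sin η ^ (N - 2) *
      (1 - 2 * σ * Real.cos η + σ ^ 2) ^ (-(((N : ℝ) + 2 * s) / 2))) := by
  simp_rw [intervalIntegral.integral_of_le Real.pi_pos.le]
  have hF : StronglyMeasurable (Function.uncurry fun σ η : ℝ =>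
      Real.sin η ^ (N - 2) * (1 - 2 * σ * Real.cos η + σ ^ 2) ^ (-(((N : ℝ) + 2 * s) / 2))) :=
    Measurable.stronglyMeasurable (by fun_prop)
  exact hF.integral_prod_right.measurable


lemma I_le_near (N : ℕ) (s σ : ℝ) (hN2 : 2 ≤ N) (hs0 : 0 < s) (hs1 : s < 1) (hσ : 1 < σ) :
    (∫ η in (0:ℝ)..π, Real.sin η ^ (N - 2) *
      (1 - 2 * σ * Real.cos η + σ ^ 2) ^ (-(((N : ℝ) + 2 * s) / 2))) ≤
    ((2 / π) ^ (-((N : ℝ) - 2 + s)) * ∫ η in Set.Ioc (0:ℝ) π, η ^ (-s)) * (σ - 1) ^ (-(s + 2)) := by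
  rw [intervalIntegral.integral_of_le Real.pi_pos.le]
  have hFint : IntegrableOn (fun η : ℝ => Real.sin η ^ (N - 2) *
      (1 - 2 * σ * Real.cos η + σ ^ 2) ^ (-(((N : ℝ) + 2 * s) / 2))) (Set.Ioc 0 π) volume :=
    (intervalIntegrable_iff_integrableOn_Ioc_of_le Real.pi_pos.le).mp (F_intInt N s σ hσ)
  have hrint : IntegrableOn (fun η : ℝ => η ^ (-s)) (Set.Ioc 0 π) volume :=
    (intervalIntegrable_iff_integrableOn_Ioc_of_le Real.pi_pos.le).mp
      (intervalIntegral.intervalIntegrable_rpow' (by linarith))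
  have hgint : IntegrableOn (fun η : ℝ =>
      (2 / π) ^ (-((N : ℝ) - 2 + s)) * (σ - 1) ^ (-(s + 2)) * η ^ (-s)) (Set.Ioc 0 π) volume :=
    hrint.const_mul _
  have hmono := setIntegral_mono_on hFint hgint measurableSet_Ioc
    (fun η hη => F_le_near N s σ η hN2 hs0 hσ hη)
  refine hmono.trans (le_of_eq ?_)
  rw [MeasureTheory.integral_const_mul]
  ring

lemma F_le_far (N : ℕ) (s σ η : ℝ) (hs0 : 0 < s) (hσ : 2 ≤ σ) (hη : η ∈ Set.Icc (0:ℝ) π) :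
    Real.sin η ^ (N - 2) * (1 - 2 * σ * Real.cos η + σ ^ 2) ^ (-(((N : ℝ) + 2 * s) / 2)) ≤
      (σ / 2) ^ (-((N : ℝ) + 2 * s)) := by
  obtain ⟨hη0, hηπ⟩ := hη
  have hσ1 : (1:ℝ) < σ := by linarith
  have hD := D_pos σ η hσ1
  have hD1 := D_lb_sq σ η hσ1.le
  have hhalf : (0:ℝ) < σ / 2 := by linarith
  have hsq : (σ / 2) ^ 2 ≤ 1 - 2 * σ * Real.cos η + σ ^ 2 := by
    nlinarith [Real.cos_le_one η]
  have hsin : Real.sin η ^ (N - 2) ≤ 1 :=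
    pow_le_one₀ (Real.sin_nonneg_of_nonneg_of_le_pi hη0 hηπ) (Real.sin_le_one η)
  have e1 : (σ / 2) ^ ((N:ℝ) + 2 * s) = ((σ / 2) ^ 2) ^ (((N:ℝ) + 2 * s) / 2) := by
    rw [← Real.rpow_natCast (σ / 2) 2, ← Real.rpow_mul hhalf.le]; congr 1; ring
  have h2 : (σ / 2) ^ ((N:ℝ) + 2 * s) ≤
      (1 - 2 * σ * Real.cos η + σ ^ 2) ^ (((N:ℝ) + 2 * s) / 2) := by
    rw [e1]
    refine Real.rpow_le_rpow (sq_nonneg _) hsq (by positivity)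
  have h3 : (1 - 2 * σ * Real.cos η + σ ^ 2) ^ (-(((N:ℝ) + 2 * s) / 2)) ≤
      (σ / 2) ^ (-((N:ℝ) + 2 * s)) := by
    rw [Real.rpow_neg hD.le, Real.rpow_neg hhalf.le]
    have hpos : (0:ℝ) < (σ / 2) ^ ((N:ℝ) + 2 * s) := Real.rpow_pos_of_pos hhalf _
    have e2 : (1 - 2 * σ * Real.cos η + σ ^ 2) ^ (((N:ℝ) + 2 * s) / 2) =
        (1 - 2 * σ * Real.cos η + σ ^ 2) ^ (((N:ℝ) + 2 * s) / 2) := rfl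
    gcongr
  calc Real.sin η ^ (N - 2) *
        (1 - 2 * σ * Real.cos η + σ ^ 2) ^ (-(((N : ℝ) + 2 * s) / 2))
      ≤ 1 * (σ / 2) ^ (-((N:ℝ) + 2 * s)) :=
        mul_le_mul hsin h3 (Real.rpow_nonneg hD.le _) zero_le_one
    _ = (σ / 2) ^ (-((N:ℝ) + 2 * s)) := one_mul _

lemma I_le_far (N : ℕ) (s σ : ℝ) (hs0 : 0 < s) (hσ : 2 ≤ σ) :
    (∫ η in (0:ℝ)..π, Real.sin η ^ (N - 2) *
      (1 - 2 * σ * Real.cos η + σ ^ 2) ^ (-(((N : ℝ) + 2 * s) / 2))) ≤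
    π * (σ / 2) ^ (-((N : ℝ) + 2 * s)) := by
  have hσ1 : (1:ℝ) < σ := by linarith
  have := intervalIntegral.integral_mono_on (μ := volume) Real.pi_pos.le (F_intInt N s σ hσ1)
    (intervalIntegrable_const (c := (σ / 2) ^ (-((N : ℝ) + 2 * s))))
    (fun η hη => F_le_far N s σ η hs0 hσ hη)
  simpa using this

lemma exp_sub_one_le (x : ℝ) (hx : 0 ≤ x) : Real.exp x - 1 ≤ x * Real.exp x := by
  have h := Real.add_one_le_exp (-x)
  rw [Real.exp_neg] at h
  have h2 : (-x + 1) * Real.exp x ≤ (Real.exp x)⁻¹ * Real.exp x :=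
    mul_le_mul_of_nonneg_right h (Real.exp_pos x).le
  rw [inv_mul_cancel₀ (Real.exp_ne_zero x)] at h2
  nlinarith

lemma G_le_near (N : ℕ) (s σ : ℝ) (hN2 : 2 ≤ N) (hs0 : 0 < s) (hs1 : s < 1) (hN : 2 * s < (N:ℝ))
    (hσ1 : 1 < σ) (hσ2 : σ ≤ 2) :
    σ ^ ((N:ℝ) - 1) - σ ^ (2 * s - 1) ≤ 2 * (N:ℝ) * 2 ^ ((N:ℝ)) * (σ - 1) := by
  have hσ0 : (0:ℝ) < σ := by linarith
  have hN2' : (2:ℝ) ≤ (N:ℝ) := by exact_mod_cast hN2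
  have e : σ ^ ((N:ℝ) - 1) - σ ^ (2 * s - 1) =
      σ ^ (2 * s - 1) * (σ ^ ((N:ℝ) - 2 * s) - 1) := by
    rw [mul_sub, ← Real.rpow_add hσ0, mul_one]; ring_nf
  have h1 : σ ^ (2 * s - 1) ≤ 2 := by
    rcases le_or_gt 0 (2 * s - 1) with h | h
    · calc σ ^ (2 * s - 1) ≤ 2 ^ (2 * s - 1) := Real.rpow_le_rpow hσ0.le hσ2 h
        _ ≤ 2 ^ (1:ℝ) := Real.rpow_le_rpow_of_exponent_le one_le_two (by linarith)
        _ = 2 := Real.rpow_one 2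
    · exact (Real.rpow_le_one_of_one_le_of_nonpos hσ1.le h.le).trans one_le_two
  have hlog : Real.log σ ≤ σ - 1 := by
    have := Real.log_le_sub_one_of_pos hσ0; linarith
  have hlog0 : 0 ≤ Real.log σ := Real.log_nonneg hσ1.le
  have hx : 0 ≤ ((N:ℝ) - 2 * s) * Real.log σ := mul_nonneg (by linarith) hlog0
  have hexp : σ ^ ((N:ℝ) - 2 * s) = Real.exp (((N:ℝ) - 2 * s) * Real.log σ) := by
    rw [Real.rpow_def_of_pos hσ0, mul_comm]
  have h2 : σ ^ ((N:ℝ) - 2 * s) - 1 ≤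
      ((N:ℝ) - 2 * s) * Real.log σ * σ ^ ((N:ℝ) - 2 * s) := by
    rw [hexp]; exact exp_sub_one_le _ hx
  have h3 : σ ^ ((N:ℝ) - 2 * s) ≤ 2 ^ ((N:ℝ)) :=
    (Real.rpow_le_rpow hσ0.le hσ2 (by linarith)).trans
      (Real.rpow_le_rpow_of_exponent_le one_le_two (by linarith))
  have hA : ((N:ℝ) - 2 * s) * Real.log σ ≤ (N:ℝ) * (σ - 1) :=
    mul_le_mul (by linarith) hlog hlog0 (by positivity)
  have h4 : ((N:ℝ) - 2 * s) * Real.log σ * σ ^ ((N:ℝ) - 2 * s) ≤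
      (N:ℝ) * (σ - 1) * 2 ^ ((N:ℝ)) :=
    mul_le_mul hA h3 (Real.rpow_nonneg hσ0.le _) (by nlinarith)
  have hG0 : 0 ≤ σ ^ ((N:ℝ) - 2 * s) - 1 := by
    have : (1:ℝ) = σ ^ (0:ℝ) := (Real.rpow_zero σ).symm
    rw [this]
    exact sub_nonneg.mpr (Real.rpow_le_rpow_of_exponent_le hσ1.le (by linarith))
  calc σ ^ ((N:ℝ) - 1) - σ ^ (2 * s - 1)
      = σ ^ (2 * s - 1) * (σ ^ ((N:ℝ) - 2 * s) - 1) := e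
    _ ≤ 2 * ((N:ℝ) * (σ - 1) * 2 ^ ((N:ℝ))) :=
        mul_le_mul h1 (h2.trans h4) hG0 (by norm_num)
    _ = 2 * (N:ℝ) * 2 ^ ((N:ℝ)) * (σ - 1) := by ring

lemma log_le_rpow_div (s σ : ℝ) (hs0 : 0 < s) (hσ : 1 < σ) : Real.log σ ≤ σ ^ s / s := by
  have hσ0 : (0:ℝ) < σ := by linarith
  have h := Real.log_le_sub_one_of_pos (Real.rpow_pos_of_pos hσ0 s)
  rw [Real.log_rpow hσ0] at h
  rw [le_div_iff₀ hs0]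
  nlinarith

end SK

open SK

/-- The function `σ ↦ K(σ) log(σ)(σ^{N−1} − σ^{2s−1})` is integrable on `(1,∞)` and its
integral `D̄` is strictly positive (for the truncated logarithm `ϑ`, one has
`(-Δ)^s ϑ(x) ≤ D̄ |x|^{-2s}` in the unit ball). -/
theorem sphericalKernel_log_integral_pos (N : ℕ) (s : ℝ) (hN2 : 2 ≤ N) (hs0 : 0 < s)
    (hs1 : s < 1) (hN : 2 * s < (N : ℝ)) :
    IntegrableOn
      (fun σ : ℝ => sphericalKernel N s σ * Real.log σ *
        (σ ^ ((N : ℝ) - 1) - σ ^ (2 * s - 1)))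
      (Set.Ioi (1 : ℝ)) ∧
    0 < ∫ σ in Set.Ioi (1 : ℝ), sphericalKernel N s σ * Real.log σ *
        (σ ^ ((N : ℝ) - 1) - σ ^ (2 * s - 1)) := by
  have hπ0 := Real.pi_pos
  have hN2' : (2:ℝ) ≤ (N:ℝ) := by exact_mod_cast hN2
  set c0 : ℝ := 2 * Real.pi ^ (((N : ℝ) - 1) / 2) / Real.Gamma (((N : ℝ) - 1) / 2) with hc0def
  have hc0 : 0 < c0 := div_pos (by positivity) (Real.Gamma_pos_of_pos (by linarith))
  set I : ℝ → ℝ := fun σ => ∫ η in (0:ℝ)..π,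
    Real.sin η ^ (N - 2) * (1 - 2 * σ * Real.cos η + σ ^ 2) ^ (-(((N:ℝ) + 2 * s) / 2))
    with hIdef
  have hker : ∀ σ : ℝ, sphericalKernel N s σ = c0 * I σ := fun σ => rfl
  set f : ℝ → ℝ := fun σ => sphericalKernel N s σ * Real.log σ *
    (σ ^ ((N : ℝ) - 1) - σ ^ (2 * s - 1)) with hfdef
  have hIpos : ∀ σ : ℝ, 1 < σ → 0 < I σ := fun σ h => I_pos N s σ h
  have hfmeas : Measurable f := by
    have h1 : Measurable I := I_meas N s
    have h2 : Measurable fun σ : ℝ => σ ^ ((N:ℝ) - 1) - σ ^ (2 * s - 1) := by fun_prop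
    have h3 : f = fun σ => c0 * I σ * Real.log σ *
        (σ ^ ((N : ℝ) - 1) - σ ^ (2 * s - 1)) := by
      funext σ; show sphericalKernel N s σ * _ * _ = _; rw [hker]
    rw [h3]
    exact ((measurable_const.mul h1).mul Real.measurable_log).mul h2
  have hfpos : ∀ σ ∈ Set.Ioi (1:ℝ), 0 < f σ := by
    intro σ hσ
    have hσ1 : (1:ℝ) < σ := hσ
    have h1 : 0 < sphericalKernel N s σ := by
      rw [hker]; exact mul_pos hc0 (hIpos σ hσ1)
    have h2 : 0 < Real.log σ := Real.log_pos hσ1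
    have h3 : 0 < σ ^ ((N:ℝ) - 1) - σ ^ (2 * s - 1) :=
      sub_pos.mpr (Real.rpow_lt_rpow_of_exponent_lt hσ1 (by linarith))
    exact mul_pos (mul_pos h1 h2) h3
  -- integrability near 1
  set CB : ℝ := (2 / π) ^ (-((N:ℝ) - 2 + s)) * ∫ η in Set.Ioc (0:ℝ) π, η ^ (-s) with hCBdef
  have hCB0 : 0 ≤ CB := by
    apply mul_nonneg (Real.rpow_nonneg (by positivity) _)
    exact MeasureTheory.setIntegral_nonneg measurableSet_Ioc
      fun η hη => Real.rpow_nonneg hη.1.le _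
  set C1 : ℝ := c0 * CB * (2 * (N:ℝ) * 2 ^ ((N:ℝ))) with hC1def
  have hint1 : IntegrableOn f (Set.Ioc (1:ℝ) 2) := by
    have hmaj : IntegrableOn (fun σ : ℝ => C1 * (σ - 1) ^ (-s)) (Set.Ioc (1:ℝ) 2) := by
      have h0 : IntervalIntegrable (fun x : ℝ => x ^ (-s)) volume 0 1 :=
        intervalIntegral.intervalIntegrable_rpow' (by linarith)
      have h1 := (h0.comp_sub_right 1).const_mul C1
      norm_num at h1
      exact (intervalIntegrable_iff_integrableOn_Ioc_of_le (by norm_num)).mp h1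
    refine Integrable.mono' hmaj (hfmeas.aestronglyMeasurable.restrict) ?_
    rw [ae_restrict_iff' measurableSet_Ioc]
    refine Eventually.of_forall fun σ hσ => ?_
    obtain ⟨hσ1, hσ2⟩ := hσ
    have ht : (0:ℝ) < σ - 1 := by linarith
    have hI := I_le_near N s σ hN2 hs0 hs1 hσ1
    rw [← hCBdef] at hI
    have hlog : Real.log σ ≤ σ - 1 := by
      have := Real.log_le_sub_one_of_pos (show (0:ℝ) < σ by linarith); linarith
    have hlog0 : 0 ≤ Real.log σ := Real.log_nonneg hσ1.le
    have hG := G_le_near N s σ hN2 hs0 hs1 hN hσ1 hσ2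
    have hG0 : 0 ≤ σ ^ ((N:ℝ) - 1) - σ ^ (2 * s - 1) := (sub_pos.mpr
      (Real.rpow_lt_rpow_of_exponent_lt hσ1 (by linarith))).le
    rw [Real.norm_eq_abs, abs_of_nonneg (hfpos σ hσ1).le]
    have m1 : c0 * I σ ≤ c0 * (CB * (σ - 1) ^ (-(s + 2))) :=
      mul_le_mul_of_nonneg_left hI hc0.le
    have hr0 : 0 ≤ CB * (σ - 1) ^ (-(s + 2)) :=
      mul_nonneg hCB0 (Real.rpow_nonneg ht.le _)
    have m2 : c0 * I σ * Real.log σ ≤ c0 * (CB * (σ - 1) ^ (-(s + 2))) * (σ - 1) :=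
      mul_le_mul m1 hlog hlog0 (by positivity)
    have m3 : c0 * I σ * Real.log σ * (σ ^ ((N:ℝ) - 1) - σ ^ (2 * s - 1)) ≤
        c0 * (CB * (σ - 1) ^ (-(s + 2))) * (σ - 1) * (2 * (N:ℝ) * 2 ^ ((N:ℝ)) * (σ - 1)) :=
      mul_le_mul m2 hG hG0 (by positivity)
    have heq : c0 * (CB * (σ - 1) ^ (-(s + 2))) * (σ - 1) * (2 * (N:ℝ) * 2 ^ ((N:ℝ)) * (σ - 1))
        = C1 * (σ - 1) ^ (-s) := by
      have ht1 : (σ - 1) ^ (-(s + 2)) * ((σ - 1) * (σ - 1)) = (σ - 1) ^ (-s) := by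
        calc (σ - 1) ^ (-(s + 2)) * ((σ - 1) * (σ - 1))
            = (σ - 1) ^ (-(s + 2)) * (σ - 1) ^ ((2:ℝ)) := by
              rw [show ((2:ℝ)) = ((2:ℕ):ℝ) by norm_num, Real.rpow_natCast]; ring
          _ = (σ - 1) ^ (-(s + 2) + 2) := (Real.rpow_add ht _ _).symm
          _ = (σ - 1) ^ (-s) := by ring_nf
      rw [hC1def, ← ht1]; ring
    calc f σ = c0 * I σ * Real.log σ * (σ ^ ((N:ℝ) - 1) - σ ^ (2 * s - 1)) := by
          show sphericalKernel N s σ * _ * _ = _; rw [hker]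
      _ ≤ _ := m3
      _ = C1 * (σ - 1) ^ (-s) := heq
  -- integrability on the tail
  set C2 : ℝ := c0 * π * 2 ^ ((N:ℝ) + 2 * s) * (1 / s) with hC2def
  have hint2 : IntegrableOn f (Set.Ioi (2:ℝ)) := by
    have hmaj : IntegrableOn (fun σ : ℝ => C2 * σ ^ (-(1 + s))) (Set.Ioi (2:ℝ)) :=
      (integrableOn_Ioi_rpow_of_lt (by linarith) (by norm_num)).const_mul C2
    refine Integrable.mono' hmaj (hfmeas.aestronglyMeasurable.restrict) ?_
    rw [ae_restrict_iff' measurableSet_Ioi]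
    refine Eventually.of_forall fun σ hσ => ?_
    have hσ2 : (2:ℝ) ≤ σ := le_of_lt hσ
    have hσ1 : (1:ℝ) < σ := by linarith
    have hσ0 : (0:ℝ) < σ := by linarith
    have hI := I_le_far N s σ hs0 hσ2
    have hlog : Real.log σ ≤ σ ^ s / s := log_le_rpow_div s σ hs0 hσ1
    have hlog0 : 0 ≤ Real.log σ := Real.log_nonneg hσ1.le
    have hG : σ ^ ((N:ℝ) - 1) - σ ^ (2 * s - 1) ≤ σ ^ ((N:ℝ) - 1) :=
      sub_le_self _ (Real.rpow_nonneg hσ0.le _)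
    have hG0 : 0 ≤ σ ^ ((N:ℝ) - 1) - σ ^ (2 * s - 1) := (sub_pos.mpr
      (Real.rpow_lt_rpow_of_exponent_lt hσ1 (by linarith))).le
    rw [Real.norm_eq_abs, abs_of_nonneg (hfpos σ hσ1).le]
    have m1 : c0 * I σ ≤ c0 * (π * (σ / 2) ^ (-((N:ℝ) + 2 * s))) :=
      mul_le_mul_of_nonneg_left hI hc0.le
    have m2 : c0 * I σ * Real.log σ ≤
        c0 * (π * (σ / 2) ^ (-((N:ℝ) + 2 * s))) * (σ ^ s / s) :=
      mul_le_mul m1 hlog hlog0 (by positivity)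
    have m3 : c0 * I σ * Real.log σ * (σ ^ ((N:ℝ) - 1) - σ ^ (2 * s - 1)) ≤
        c0 * (π * (σ / 2) ^ (-((N:ℝ) + 2 * s))) * (σ ^ s / s) * σ ^ ((N:ℝ) - 1) :=
      mul_le_mul m2 hG hG0 (by positivity)
    have e : (σ / 2) ^ (-((N:ℝ) + 2 * s)) = σ ^ (-((N:ℝ) + 2 * s)) * 2 ^ ((N:ℝ) + 2 * s) := by
      rw [Real.div_rpow hσ0.le (by norm_num : (0:ℝ) ≤ 2), div_eq_mul_inv,
        Real.rpow_neg (by norm_num : (0:ℝ) ≤ 2), inv_inv]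
    have e2 : σ ^ (-((N:ℝ) + 2 * s)) * (σ ^ s * σ ^ ((N:ℝ) - 1)) = σ ^ (-(1 + s)) := by
      rw [← Real.rpow_add hσ0, ← Real.rpow_add hσ0]; congr 1; ring
    have heq : c0 * (π * (σ / 2) ^ (-((N:ℝ) + 2 * s))) * (σ ^ s / s) * σ ^ ((N:ℝ) - 1)
        = C2 * σ ^ (-(1 + s)) := by
      rw [e, hC2def, ← e2]; ring
    calc f σ = c0 * I σ * Real.log σ * (σ ^ ((N:ℝ) - 1) - σ ^ (2 * s - 1)) := by
          show sphericalKernel N s σ * _ * _ = _; rw [hker]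
      _ ≤ _ := m3
      _ = C2 * σ ^ (-(1 + s)) := heq
  have hunion : Set.Ioi (1:ℝ) = Set.Ioc (1:ℝ) 2 ∪ Set.Ioi (2:ℝ) :=
    (Set.Ioc_union_Ioi_eq_Ioi (by norm_num)).symm
  have hint : IntegrableOn f (Set.Ioi (1:ℝ)) := by
    rw [hunion]; exact hint1.union hint2
  refine ⟨hint, ?_⟩
  have hae : 0 ≤ᵐ[volume.restrict (Set.Ioi (1:ℝ))] f := by
    rw [EventuallyLE, ae_restrict_iff' measurableSet_Ioi]
    exact Eventually.of_forall fun σ hσ => (hfpos σ hσ).le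
  rw [MeasureTheory.setIntegral_pos_iff_support_of_nonneg_ae hae hint]
  have hsub : Set.Ioi (1:ℝ) ⊆ Function.support f ∩ Set.Ioi 1 :=
    fun σ hσ => ⟨(hfpos σ hσ).ne', hσ⟩
  calc (0:ENNReal) < volume (Set.Ioi (1:ℝ)) := by simp [Real.volume_Ioi]
    _ ≤ volume (Function.support f ∩ Set.Ioi 1) := measure_mono hsub


end
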